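/- arXiv:1004.2437 — 2 statements merged into one kernel-verified Lean document; each statement's English description precedes it below -/
import Mathlib

section
/- ∫₀¹ x·log(x)/(x²+x+1) dx = -7π²/54 + (1/9)ψ'(1/3). -/
/-!
For `0 < x < 1`, `x / (x² + x + 1) = (x - x²) / (1 - x³) = ∑ₖ (x^(3k+1) - x^(3k+2))`, and
`∫₀¹ xⁿ log x = -1/(n+1)²`. All terms of the expanded integrand have the same sign, so the series
may be integrated termwise, giving `∑ₖ (1/(3k+3)² - 1/(3k+2)²)`. Splitting `∑ 1/n² = π²/6` by
residues mod 3, the class of `0` contributes `π²/54` and the class of `1` contributes `ψ'(1/3)/9`;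
hence the class of `2` is `π²/6 - π²/54 - ψ'(1/3)/9`.
-/

open Real Set MeasureTheory intervalIntegral

/-- The trigamma function `ψ'(x) = ∑_{k=0}^∞ 1/(x+k)²`. -/
noncomputable def trigamma (x : ℝ) : ℝ := ∑' k : ℕ, 1 / (x + k) ^ 2

theorem hasSum_one_div_nat_add_one_sq :
    HasSum (fun n : ℕ => 1 / ((n : ℝ) + 1) ^ 2) (π ^ 2 / 6) := by
  simpa using (hasSum_nat_add_iff' 1).mpr hasSum_zeta_two

theorem summable_one_div_three_mul_add_sq (j : ℕ) :
    Summable fun m : ℕ => 1 / (((3 * m + j : ℕ) : ℝ) + 1) ^ 2 :=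
  hasSum_one_div_nat_add_one_sq.summable.comp_injective fun a b h => by simpa using h

theorem tsum_eq_tsum_mod_three {f : ℕ → ℝ} (hf : Summable f) :
    ∑' n, f n = ∑' m, f (3 * m) + ∑' m, f (3 * m + 1) + ∑' m, f (3 * m + 2) := by
  rw [Nat.sumByResidueClasses hf 3]
  refine (Fin.sum_univ_three fun j : Fin 3 => ∑' m, f (j.val + 3 * m)).trans ?_
  simp [add_comm]

theorem tsum_one_div_three_mul_add_three_sq :
    ∑' m : ℕ, 1 / (((3 * m + 2 : ℕ) : ℝ) + 1) ^ 2 = π ^ 2 / 54 := by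
  have h := hasSum_one_div_nat_add_one_sq.mul_left (1 / 9)
  rw [show 1 / 9 * (π ^ 2 / 6) = π ^ 2 / 54 by ring] at h
  refine h.tsum_eq ▸ tsum_congr fun m => ?_
  push_cast
  field_simp
  ring

theorem trigamma_one_third :
    trigamma (1 / 3) = 9 * ∑' m : ℕ, 1 / (((3 * m : ℕ) : ℝ) + 1) ^ 2 := by
  rw [trigamma, ← tsum_mul_left]
  refine tsum_congr fun m => ?_
  push_cast
  field_simp
  ring

theorem tsum_one_div_sq_sub_mod_three :
    ∑' k : ℕ, (1 / (((3 * k + 2 : ℕ) : ℝ) + 1) ^ 2 - 1 / (((3 * k + 1 : ℕ) : ℝ) + 1) ^ 2) =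
      -(7 * π ^ 2 / 54) + 1 / 9 * trigamma (1 / 3) := by
  have hS := hasSum_one_div_nat_add_one_sq
  have hres := tsum_eq_tsum_mod_three hS.summable
  rw [(summable_one_div_three_mul_add_sq 2).tsum_sub (summable_one_div_three_mul_add_sq 1)]
  rw [hS.tsum_eq, tsum_one_div_three_mul_add_three_sq] at hres
  rw [trigamma_one_third, tsum_one_div_three_mul_add_three_sq]
  linarith

theorem intervalIntegrable_pow_mul_log (n : ℕ) (a b : ℝ) :
    IntervalIntegrable (fun x => x ^ n * log x) volume a b :=
  intervalIntegrable_log'.continuousOn_mul (continuous_pow n).continuousOn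

theorem integral_pow_mul_log (n : ℕ) :
    ∫ x in (0:ℝ)..1, x ^ n * log x = -1 / ((n : ℝ) + 1) ^ 2 := by
  have hn : (n : ℝ) + 1 ≠ 0 := by positivity
  have hcont : Continuous fun x : ℝ =>
      x ^ (n + 1) * log x / (n + 1) - x ^ (n + 1) / (n + 1) ^ 2 := by
    have : Continuous fun x : ℝ => x ^ (n + 1) * log x :=
      ((continuous_pow n).mul continuous_mul_log).congr fun x => by simp only [Pi.mul_apply]; ring
    exact (this.div_const _).sub ((continuous_pow _).div_const _)
  rw [intervalIntegral.integral_eq_sub_of_hasDerivAt_of_le zero_le_one hcont.continuousOn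
    (fun x hx => ?_) (intervalIntegrable_pow_mul_log n 0 1)]
  · simp [neg_div]
  · have h := (((hasDerivAt_pow (n + 1) x).mul (hasDerivAt_log hx.1.ne')).div_const
      ((n : ℝ) + 1)).sub ((hasDerivAt_pow (n + 1) x).div_const (((n : ℝ) + 1) ^ 2))
    refine h.congr_deriv ?_
    simp only [Nat.add_sub_cancel, Nat.cast_add_one, pow_succ]
    field_simp [hx.1.ne']
    ring

theorem integral_pow_sub_pow_mul_log (m n : ℕ) :
    ∫ x in (0:ℝ)..1, (x ^ m - x ^ n) * log x =
      1 / ((n : ℝ) + 1) ^ 2 - 1 / ((m : ℝ) + 1) ^ 2 := by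
  simp only [sub_mul]
  rw [intervalIntegral.integral_sub (intervalIntegrable_pow_mul_log m 0 1)
    (intervalIntegrable_pow_mul_log n 0 1), integral_pow_mul_log, integral_pow_mul_log]
  ring

theorem pow_sub_pow_mul_log_nonpos {m n : ℕ} (hmn : m ≤ n) {x : ℝ} (hx : x ∈ Ioo (0:ℝ) 1) :
    (x ^ m - x ^ n) * log x ≤ 0 :=
  mul_nonpos_of_nonneg_of_nonpos (sub_nonneg.2 (pow_le_pow_of_le_one hx.1.le hx.2.le hmn))
    (log_nonpos hx.1.le hx.2.le)

theorem hasSum_pow_sub_pow_three_mul {x : ℝ} (h0 : 0 ≤ x) (h1 : x < 1) :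
    HasSum (fun k : ℕ => x ^ (3 * k + 1) - x ^ (3 * k + 2)) (x / (x ^ 2 + x + 1)) := by
  have hx3 : x ^ 3 < 1 := pow_lt_one₀ h0 h1 three_ne_zero
  have hval : x / (x ^ 2 + x + 1) = (x - x ^ 2) * (1 - x ^ 3)⁻¹ := by
    have : 1 - x ^ 3 ≠ 0 := by linarith
    field_simp
    ring
  rw [hval]
  exact ((hasSum_geometric_of_lt_one (pow_nonneg h0 3) hx3).mul_left (x - x ^ 2)).congr_fun
    fun k => by ring

theorem hasSum_integral_of_nonpos {α ι : Type*} [MeasurableSpace α] {μ : Measure α} [Countable ι]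
    {F : ι → α → ℝ} (hF_int : ∀ i, Integrable (F i) μ) (hF_nonpos : ∀ i, F i ≤ᵐ[μ] 0)
    (hF_sum : Summable fun i => ∫ a, F i a ∂μ) :
    HasSum (fun i => ∫ a, F i a ∂μ) (∫ a, ∑' i, F i a ∂μ) := by
  refine hasSum_integral_of_summable_integral_norm hF_int (hF_sum.neg.congr fun i => ?_)
  rw [← MeasureTheory.integral_neg]
  exact integral_congr_ae <| (hF_nonpos i).mono fun a ha => (Real.norm_of_nonpos ha).symm

theorem stmt6 :
    ∫ x in (0:ℝ)..1, x * Real.log x / (x ^ 2 + x + 1) =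
      -(7 * Real.pi ^ 2 / 54) + (1 / 9) * trigamma (1/3) := by
  set F : ℕ → ℝ → ℝ := fun k x => (x ^ (3 * k + 1) - x ^ (3 * k + 2)) * log x
  have hF_int : ∀ k, ∫ x in Ioo (0:ℝ) 1, F k x =
      1 / (((3 * k + 2 : ℕ) : ℝ) + 1) ^ 2 - 1 / (((3 * k + 1 : ℕ) : ℝ) + 1) ^ 2 := fun k => by
    rw [← integral_Ioc_eq_integral_Ioo, ← intervalIntegral.integral_of_le zero_le_one,
      integral_pow_sub_pow_mul_log]
  have hF_sum : ∀ x ∈ Ioo (0:ℝ) 1, ∑' k, F k x = x * log x / (x ^ 2 + x + 1) := fun x hx => by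
    rw [mul_div_right_comm]
    exact ((hasSum_pow_sub_pow_three_mul hx.1.le hx.2).mul_right (log x)).tsum_eq
  have hexpand := hasSum_integral_of_nonpos (μ := volume.restrict (Ioo (0:ℝ) 1)) (F := F)
    (fun k => (intervalIntegrable_iff_integrableOn_Ioo_of_le zero_le_one).1 <|
      intervalIntegrable_log'.continuousOn_mul (by fun_prop))
    (fun k => (ae_restrict_mem measurableSet_Ioo).mono fun x hx =>
      pow_sub_pow_mul_log_nonpos (by omega) hx)
    (((summable_one_div_three_mul_add_sq 2).sub (summable_one_div_three_mul_add_sq 1)).congr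
      fun k => (hF_int k).symm)
  rw [intervalIntegral.integral_of_le zero_le_one, integral_Ioc_eq_integral_Ioo,
    ← setIntegral_congr_fun measurableSet_Ioo hF_sum, ← hexpand.tsum_eq,
    tsum_congr hF_int, tsum_one_div_sq_sub_mod_three]
end

section
/- ∫₀¹ (1-x)/(1-x⁶)·log²(x) dx = (8√3·π³ + 351·ζ(3))/486. -/
/-!
Expanding `(1 - x) / (1 - x⁶) = ∑_q (x^{6q} - x^{6q+1})` and integrating termwise with
`∫₀¹ xⁿ log² x dx = 2 / (n + 1)³` turns the integral into `2 (T₁ - T₂)`, where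
`T_r = ∑_{n ≡ r mod 6} 1 / n³`. Since `1 / (a n)³ = a⁻³ / n³`, the sums over multiples of 2, 3 and 6
give `T₁ - T₂ - T₄ + T₅ = 13 ζ(3) / 18`, while `T₁ - T₂ + T₄ - T₅ = (2 / √3) ∑ sin(2πn/3) / n³`
is `4 √3 π³ / 243` by the Bernoulli-polynomial formula for that sine series.
-/

open Real MeasureTheory Filter Set Topology

lemma tendsto_pow_mul_log_pow_nhdsGT_zero {n : ℕ} (hn : n ≠ 0) (k : ℕ) :
    Tendsto (fun x : ℝ => x ^ n * log x ^ k) (𝓝[>] 0) (𝓝 0) := by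
  have h := (isLittleO_abs_log_rpow_rpow_nhdsGT_zero (k : ℝ)
    (neg_lt_zero.2 (Nat.cast_pos.2 (Nat.pos_of_ne_zero hn)))).tendsto_div_nhds_zero
  rw [tendsto_zero_iff_norm_tendsto_zero]
  refine h.congr' ?_
  filter_upwards [self_mem_nhdsWithin] with x (hx : 0 < x)
  rw [rpow_neg hx.le, div_inv_eq_mul, rpow_natCast, rpow_natCast, norm_mul, norm_pow, norm_pow,
    Real.norm_eq_abs, Real.norm_eq_abs, abs_of_pos hx, mul_comm]

noncomputable def powMulLogSqPrimitive (n : ℕ) (x : ℝ) : ℝ :=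
  x ^ (n + 1) * (log x ^ 2 / (n + 1) - 2 * log x / (n + 1) ^ 2 + 2 / (n + 1) ^ 3)

lemma hasDerivAt_powMulLogSqPrimitive (n : ℕ) {x : ℝ} (hx : x ≠ 0) :
    HasDerivAt (powMulLogSqPrimitive n) (x ^ n * log x ^ 2) x := by
  have hlog : HasDerivAt log x⁻¹ x := hasDerivAt_log hx
  refine ((hasDerivAt_pow (n + 1) x).mul ((((hlog.pow 2).div_const ((n : ℝ) + 1)).sub
    ((hlog.const_mul 2).div_const (((n : ℝ) + 1) ^ 2))).add_const (2 / ((n : ℝ) + 1) ^ 3)))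
    |>.congr_deriv ?_
  simp only [Pi.sub_apply, Pi.pow_apply, Nat.add_sub_cancel, Nat.cast_add, Nat.cast_one,
    Nat.cast_ofNat]
  field_simp
  ring

lemma continuousOn_powMulLogSqPrimitive (n : ℕ) :
    ContinuousOn (powMulLogSqPrimitive n) (Ici 0) := by
  intro x (hx : 0 ≤ x)
  rcases hx.eq_or_lt with rfl | hx
  · have hlim : Tendsto (powMulLogSqPrimitive n) (𝓝[>] 0) (𝓝 0) := by
      have h := (((tendsto_pow_mul_log_pow_nhdsGT_zero (n := n + 1) n.succ_ne_zero 2).div_const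
        ((n : ℝ) + 1)).sub (((tendsto_pow_mul_log_pow_nhdsGT_zero (n := n + 1) n.succ_ne_zero
          1).const_mul 2).div_const (((n : ℝ) + 1) ^ 2))).add
        (((tendsto_pow_mul_log_pow_nhdsGT_zero (n := n + 1) n.succ_ne_zero 0).const_mul
          2).div_const (((n : ℝ) + 1) ^ 3))
      simp only [mul_zero, zero_div, sub_zero, add_zero] at h
      refine h.congr fun x => ?_
      simp only [powMulLogSqPrimitive]
      ring
    have h0 : powMulLogSqPrimitive n 0 = 0 := by simp [powMulLogSqPrimitive]
    rw [← continuousWithinAt_Ioi_iff_Ici, ContinuousWithinAt, h0]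
    exact hlim
  · exact (hasDerivAt_powMulLogSqPrimitive n hx.ne').continuousAt.continuousWithinAt

lemma intervalIntegrable_pow_mul_log_sq (n : ℕ) :
    IntervalIntegrable (fun x : ℝ => x ^ n * log x ^ 2) volume 0 1 := by
  refine intervalIntegral.intervalIntegrable_deriv_of_nonneg
    ((continuousOn_powMulLogSqPrimitive n).mono ?_)
    (fun x hx => hasDerivAt_powMulLogSqPrimitive n (ne_of_gt ?_)) (fun x hx => ?_)
  · simp [uIcc_of_le, Icc_subset_Ici_self]
  · simpa using hx.1
  · have : 0 < x := by simpa using hx.1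
    positivity

lemma integral_pow_mul_log_sq (n : ℕ) :
    ∫ x in (0 : ℝ)..1, x ^ n * log x ^ 2 = 2 / ((n : ℝ) + 1) ^ 3 := by
  rw [intervalIntegral.integral_eq_sub_of_hasDerivAt_of_le zero_le_one
    ((continuousOn_powMulLogSqPrimitive n).mono Icc_subset_Ici_self)
    (fun x hx => hasDerivAt_powMulLogSqPrimitive n hx.1.ne') (intervalIntegrable_pow_mul_log_sq n)]
  simp [powMulLogSqPrimitive]

lemma summable_one_div_mul_add_pow {m : ℕ} (hm : m ≠ 0) (c : ℕ) {p : ℕ} (hp : 1 < p) :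
    Summable (fun q : ℕ => 1 / ((m * q : ℝ) + c) ^ p) := by
  have hinj : Function.Injective (fun q : ℕ => m * q + c) := fun a b hab => by
    simpa [hm] using hab
  exact ((Real.summable_one_div_nat_pow.mpr hp).comp_injective hinj).congr fun q => by simp

lemma hasSum_one_sub_div_one_sub_pow {m : ℕ} (hm : m ≠ 0) {x : ℝ} (hx : |x| < 1) :
    HasSum (fun q : ℕ => x ^ (m * q) - x ^ (m * q + 1)) ((1 - x) / (1 - x ^ m)) := by
  have hxm : |x ^ m| < 1 := by
    rw [abs_pow]
    exact pow_lt_one₀ (abs_nonneg x) hx hm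
  have hgeom := (hasSum_geometric_of_abs_lt_one hxm).mul_left (1 - x)
  rw [← div_eq_mul_inv] at hgeom
  exact hgeom.congr_fun fun q => by rw [pow_succ, pow_mul]; ring

lemma hasSum_integral_one_sub_div_one_sub_pow_mul_log_sq {m : ℕ} (hm : m ≠ 0) :
    HasSum (fun q : ℕ => 2 / ((m * q : ℝ) + 1) ^ 3 - 2 / ((m * q : ℝ) + 2) ^ 3)
      (∫ x in (0 : ℝ)..1, (1 - x) / (1 - x ^ m) * log x ^ 2) := by
  set F : ℕ → ℝ → ℝ := fun q x => x ^ (m * q) * log x ^ 2 - x ^ (m * q + 1) * log x ^ 2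
  have hF_int (q : ℕ) : IntervalIntegrable (F q) volume 0 1 :=
    (intervalIntegrable_pow_mul_log_sq _).sub (intervalIntegrable_pow_mul_log_sq _)
  have hF_integral (q : ℕ) :
      ∫ x in Ioo (0 : ℝ) 1, F q x = 2 / ((m * q : ℝ) + 1) ^ 3 - 2 / ((m * q : ℝ) + 2) ^ 3 := by
    rw [← integral_Ioc_eq_integral_Ioo, ← intervalIntegral.integral_of_le zero_le_one,
      intervalIntegral.integral_sub (intervalIntegrable_pow_mul_log_sq _)
        (intervalIntegrable_pow_mul_log_sq _), integral_pow_mul_log_sq, integral_pow_mul_log_sq]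
    push_cast
    ring
  have hF_norm (q : ℕ) : ∫ x in Ioo (0 : ℝ) 1, ‖F q x‖ = ∫ x in Ioo (0 : ℝ) 1, F q x := by
    refine setIntegral_congr_fun measurableSet_Ioo fun x hx => Real.norm_of_nonneg ?_
    have : x ^ (m * q + 1) ≤ x ^ (m * q) := pow_le_pow_of_le_one hx.1.le hx.2.le (by omega)
    simp only [F]
    nlinarith [sq_nonneg (log x)]
  have hsum := hasSum_integral_of_summable_integral_norm (μ := volume.restrict (Ioo 0 1))
    (fun q => (hF_int q).1.mono_set Ioo_subset_Ioc_self) <| by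
      simp only [hF_norm, hF_integral]
      exact ((summable_one_div_mul_add_pow hm 1 (p := 3) (by norm_num)).mul_left 2).sub
        ((summable_one_div_mul_add_pow hm 2 (p := 3) (by norm_num)).mul_left 2) |>.congr
          fun q => by push_cast; ring
  simp only [hF_integral] at hsum
  rw [intervalIntegral.integral_of_le zero_le_one, integral_Ioc_eq_integral_Ioo]
  have hintegrand : ∫ x in Ioo (0 : ℝ) 1, (1 - x) / (1 - x ^ m) * log x ^ 2
      = ∫ x in Ioo (0 : ℝ) 1, ∑' q, F q x := by
    refine setIntegral_congr_fun measurableSet_Ioo fun x hx => ?_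
    have hx' : |x| < 1 := by rw [abs_of_pos hx.1]; exact hx.2
    exact (((hasSum_one_sub_div_one_sub_pow hm hx').mul_right (log x ^ 2)).congr_fun fun q => by
      simp only [F]; ring).tsum_eq.symm
  rwa [hintegrand]

lemma tsum_eq_sum_range_tsum_mul_add {f : ℕ → ℝ} (hf : Summable f) (N : ℕ) [NeZero N] :
    ∑' n, f n = ∑ r ∈ Finset.range N, ∑' q, f (N * q + r) := by
  obtain ⟨N, rfl⟩ : ∃ M, N = M + 1 := Nat.exists_eq_succ_of_ne_zero (NeZero.ne N)
  rw [Nat.sumByResidueClasses hf (N + 1), ← Fin.sum_univ_eq_sum_range]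
  refine Finset.sum_congr rfl fun r _ => tsum_congr fun q => ?_
  rw [add_comm]
  rfl

lemma tsum_mul_add_eq_sum_range_tsum {f : ℕ → ℝ} (a b N : ℕ) [NeZero N]
    (hf : Summable fun q => f (a * q + b)) :
    ∑' q, f (a * q + b) = ∑ r ∈ Finset.range N, ∑' q, f (a * N * q + (a * r + b)) := by
  rw [tsum_eq_sum_range_tsum_mul_add hf N]
  refine Finset.sum_congr rfl fun r _ => tsum_congr fun q => ?_
  ring_nf

lemma hasSum_one_div_nat_pow_three_mul_sin :
    HasSum (fun n : ℕ => 1 / (n : ℝ) ^ 3 * sin (2 * π * n * (1 / 3))) (2 * π ^ 3 / 81) := by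
  have h := hasSum_one_div_nat_pow_mul_sin one_ne_zero (x := 1 / 3) ⟨by norm_num, by norm_num⟩
  have hB : ((Polynomial.bernoulli 3).map (algebraMap ℚ ℝ)).eval (1 / 3 : ℝ) = 1 / 27 := by
    simp [Polynomial.bernoulli, Finset.sum_range_succ, bernoulli_eq_bernoulli'_of_ne_one,
      bernoulli'_two, bernoulli'_three]
    norm_num
  rw [show 2 * 1 + 1 = 3 from rfl, hB] at h
  convert h using 1
  norm_num [Nat.factorial]
  ring

lemma sin_two_pi_mul_three_mul_add_div_three (q r : ℕ) :
    sin (2 * π * ((3 * q + r : ℕ) : ℝ) * (1 / 3)) = sin (2 * π * r / 3) := by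
  rw [show 2 * π * ((3 * q + r : ℕ) : ℝ) * (1 / 3) = 2 * π * r / 3 + q * (2 * π) by
    push_cast; ring, sin_add_nat_mul_two_pi]

/-- The junk value `invCube 0 = 0` lets the residue class of `0` contain `n = 0` harmlessly. -/
noncomputable def invCube (n : ℕ) : ℝ := 1 / (n : ℝ) ^ 3

noncomputable def invCubeSumMod6 (r : ℕ) : ℝ := ∑' q, invCube (6 * q + r)

lemma summable_invCube : Summable invCube :=
  Real.summable_one_div_nat_pow.mpr (by norm_num)

lemma summable_invCube_mul_add {a : ℕ} (ha : a ≠ 0) (b : ℕ) :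
    Summable fun q => invCube (a * q + b) :=
  (summable_one_div_mul_add_pow ha b (p := 3) (by norm_num)).congr fun q => by simp [invCube]

lemma tsum_invCube_div_pow (a : ℕ) : (∑' n, invCube n) / a ^ 3 = ∑' n, invCube (a * n) := by
  rw [← tsum_div_const]
  refine tsum_congr fun n => ?_
  simp only [invCube, Nat.cast_mul, mul_pow, one_div, mul_inv]
  ring

lemma tsum_invCube_eq_sum_invCubeSumMod6 :
    ∑' n, invCube n = invCubeSumMod6 0 + invCubeSumMod6 1 + invCubeSumMod6 2 +
      invCubeSumMod6 3 + invCubeSumMod6 4 + invCubeSumMod6 5 := by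
  rw [tsum_eq_sum_range_tsum_mul_add summable_invCube 6]
  simp [Finset.sum_range_succ, invCubeSumMod6]

lemma tsum_invCube_three_mul_add (b : ℕ) :
    ∑' q, invCube (3 * q + b) = invCubeSumMod6 b + invCubeSumMod6 (b + 3) := by
  have h := tsum_mul_add_eq_sum_range_tsum 3 b 2 (summable_invCube_mul_add three_ne_zero b)
  norm_num [Finset.sum_range_succ] at h
  rw [h, add_comm 3 b]
  rfl

lemma invCubeSumMod6_alternating :
    invCubeSumMod6 1 - invCubeSumMod6 2 + invCubeSumMod6 4 - invCubeSumMod6 5 =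
      4 * √3 * π ^ 3 / 243 := by
  have hsin : HasSum (fun n => invCube n * sin (2 * π * n * (1 / 3))) (2 * π ^ 3 / 81) :=
    hasSum_one_div_nat_pow_three_mul_sin
  have hs1 : sin (2 * π * (1 : ℕ) / 3) = √3 / 2 := by
    rw [show 2 * π * (1 : ℕ) / 3 = π - π / 3 by push_cast; ring, sin_pi_sub, sin_pi_div_three]
  have hs2 : sin (2 * π * (2 : ℕ) / 3) = -(√3 / 2) := by
    rw [show 2 * π * (2 : ℕ) / 3 = π / 3 + π by push_cast; ring, sin_add_pi, sin_pi_div_three]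
  have hsum : 2 * π ^ 3 / 81 = √3 / 2 * (invCubeSumMod6 1 - invCubeSumMod6 2 +
      invCubeSumMod6 4 - invCubeSumMod6 5) := by
    rw [← hsin.tsum_eq, tsum_eq_sum_range_tsum_mul_add hsin.summable 3]
    simp only [sin_two_pi_mul_three_mul_add_div_three, tsum_mul_right, Finset.sum_range_succ,
      Finset.sum_range_zero]
    rw [tsum_invCube_three_mul_add 1, tsum_invCube_three_mul_add 2, hs1, hs2]
    simp
    ring
  linear_combination (-(2 * √3 / 3)) * hsum -
    ((invCubeSumMod6 1 - invCubeSumMod6 2 + invCubeSumMod6 4 - invCubeSumMod6 5) / 3) *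
      (sq_sqrt (show (0 : ℝ) ≤ 3 by norm_num))

lemma tsum_invCube_div_pow_eq_sum_range {a : ℕ} (ha : a ≠ 0) (N : ℕ) [NeZero N] :
    (∑' n, invCube n) / a ^ 3 = ∑ r ∈ Finset.range N, ∑' q, invCube (a * N * q + a * r) := by
  have h := tsum_mul_add_eq_sum_range_tsum a 0 N (summable_invCube_mul_add ha 0)
  simp only [add_zero] at h
  rw [tsum_invCube_div_pow, h]

lemma hasSum_two_div_six_mul_add_one_pow_sub :
    HasSum (fun q : ℕ => 2 / ((6 * q : ℝ) + 1) ^ 3 - 2 / ((6 * q : ℝ) + 2) ^ 3)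
      ((8 * √3 * π ^ 3 + 351 * ∑' k : ℕ, 1 / ((k : ℝ) + 1) ^ 3) / 486) := by
  have hζ : ∑' n, invCube n = ∑' k : ℕ, 1 / ((k : ℝ) + 1) ^ 3 := by
    rw [summable_invCube.tsum_eq_zero_add]
    simp [invCube]
  have heven : (∑' n, invCube n) / 8 =
      invCubeSumMod6 0 + invCubeSumMod6 2 + invCubeSumMod6 4 := by
    have h := tsum_invCube_div_pow_eq_sum_range two_ne_zero 3
    norm_num [Finset.sum_range_succ] at h
    exact h
  have hthree : (∑' n, invCube n) / 27 = invCubeSumMod6 0 + invCubeSumMod6 3 := by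
    have h := tsum_invCube_div_pow_eq_sum_range three_ne_zero 2
    norm_num [Finset.sum_range_succ] at h
    exact h
  have hsix : (∑' n, invCube n) / 216 = invCubeSumMod6 0 := by
    have h := tsum_invCube_div_pow_eq_sum_range (a := 6) (by norm_num) 1
    norm_num at h
    exact h
  have hval : 2 * invCubeSumMod6 1 - 2 * invCubeSumMod6 2 =
      (8 * √3 * π ^ 3 + 351 * ∑' n, invCube n) / 486 := by
    linear_combination (-1) * tsum_invCube_eq_sum_invCubeSumMod6 + 2 * heven + hthree - 2 * hsix +
      invCubeSumMod6_alternating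
  rw [← hζ, ← hval]
  refine ((summable_invCube_mul_add (a := 6) (by norm_num) 1).hasSum.mul_left 2).sub
    ((summable_invCube_mul_add (a := 6) (by norm_num) 2).hasSum.mul_left 2) |>.congr_fun
      fun q => ?_
  simp only [invCube]
  push_cast
  ring

theorem stmt15 :
    ∫ x in (0:ℝ)..1, (1 - x) / (1 - x ^ 6) * Real.log x ^ 2 =
      (8 * Real.sqrt 3 * Real.pi ^ 3 + 351 * ∑' k : ℕ, 1 / ((k : ℝ) + 1) ^ 3) / 486 := by
  have h := hasSum_integral_one_sub_div_one_sub_pow_mul_log_sq (m := 6) (by norm_num)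
  push_cast at h
  exact h.unique hasSum_two_div_six_mul_add_one_pow_sub
end
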